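/- arXiv:1908.10935 — 6 statements merged into one kernel-verified Lean document; each statement's English description precedes it below -/
import Mathlib

section
/- For all real x and y, the supremum over θ ∈ ℝ of |x·tanh(xθ) − y·tanh(yθ)|/|θ| equals |x² − y²|. -/
/-!
Write `φ u = u * tanh u`. Since `θ * (x * tanh (x * θ)) = φ (x * θ)`, the upper bound is the
inequality `|φ p - φ q| ≤ |p ^ 2 - q ^ 2|`. As `φ` is even it suffices to take `0 ≤ q ≤ p`, where
it says that both `φ` and `u ↦ u ^ 2 - φ u` are monotone on `[0, ∞)`; the derivative of the
latter is `(u - tanh u) + u * tanh u ^ 2 ≥ 0`. The bound is attained in the limit `θ → 0`,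
because the ratio is the absolute value of a difference quotient at `0` of a function with
derivative `x ^ 2 - y ^ 2`.
-/

open Real Set

theorem Real.hasDerivAt_tanh (x : ℝ) : HasDerivAt tanh (1 - tanh x ^ 2) x := by
  have h := (hasDerivAt_sinh x).div (hasDerivAt_cosh x) (cosh_pos x).ne'
  rw [show sinh / cosh = tanh from funext fun t => (tanh_eq_sinh_div_cosh t).symm] at h
  refine h.congr_deriv ?_
  rw [tanh_eq_sinh_div_cosh]
  field_simp

theorem Real.tanh_nonneg {x : ℝ} (hx : 0 ≤ x) : 0 ≤ tanh x := by
  rw [tanh_eq_sinh_div_cosh]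
  exact div_nonneg (sinh_nonneg_iff.2 hx) (cosh_pos x).le

theorem Real.tanh_le_self {x : ℝ} (hx : 0 ≤ x) : tanh x ≤ x := by
  have hmono : Monotone (fun u => u - tanh u) :=
    monotone_of_hasDerivAt_nonneg (fun u => ((hasDerivAt_id u).sub (hasDerivAt_tanh u)))
      fun u => by simp only [sub_sub_cancel]; positivity
  simpa [tanh_zero] using hmono hx

theorem monotoneOn_Ici_zero_of_hasDerivAt {f f' : ℝ → ℝ} (hf : ∀ x, HasDerivAt f (f' x) x)
    (hf' : ∀ x, 0 < x → 0 ≤ f' x) : MonotoneOn f (Ici 0) :=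
  monotoneOn_of_hasDerivWithinAt_nonneg (convex_Ici 0)
    (fun x _ => (hf x).continuousAt.continuousWithinAt)
    (fun x _ => (hf x).hasDerivWithinAt) (fun x hx => hf' x (by simpa using hx))

theorem Real.hasDerivAt_mul_tanh (u : ℝ) :
    HasDerivAt (fun u => u * tanh u) (tanh u + u * (1 - tanh u ^ 2)) u :=
  ((hasDerivAt_id' u).mul (hasDerivAt_tanh u)).congr_deriv (by ring)

theorem Real.monotoneOn_mul_tanh : MonotoneOn (fun u => u * tanh u) (Ici 0) :=
  monotoneOn_Ici_zero_of_hasDerivAt hasDerivAt_mul_tanh fun u hu => by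
    have := tanh_sq_lt_one u
    have := tanh_nonneg hu.le
    nlinarith

theorem Real.monotoneOn_sq_sub_mul_tanh : MonotoneOn (fun u => u ^ 2 - u * tanh u) (Ici 0) :=
  monotoneOn_Ici_zero_of_hasDerivAt (fun u => (hasDerivAt_pow 2 u).sub (hasDerivAt_mul_tanh u))
    fun u hu => by
      have := tanh_le_self hu.le
      norm_num
      nlinarith [sq_nonneg (tanh u)]

theorem Real.abs_mul_tanh_sub_mul_tanh_le_of_le {a b : ℝ} (hb : 0 ≤ b) (hba : b ≤ a) :
    |a * tanh a - b * tanh b| ≤ a ^ 2 - b ^ 2 := by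
  have hφ := monotoneOn_mul_tanh (mem_Ici.2 hb) (mem_Ici.2 (hb.trans hba)) hba
  have hψ := monotoneOn_sq_sub_mul_tanh (mem_Ici.2 hb) (mem_Ici.2 (hb.trans hba)) hba
  exact abs_le.2 ⟨by linarith [sq_nonneg b, mul_le_mul hba hba hb (hb.trans hba)], by linarith⟩

theorem Real.abs_mul_tanh_abs (x : ℝ) : |x| * tanh |x| = x * tanh x := by
  rcases abs_cases x with ⟨h, _⟩ | ⟨h, _⟩ <;> simp [h, tanh_neg]

theorem Real.abs_mul_tanh_sub_mul_tanh_le (p q : ℝ) :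
    |p * tanh p - q * tanh q| ≤ |p ^ 2 - q ^ 2| := by
  rw [← abs_mul_tanh_abs p, ← abs_mul_tanh_abs q, ← sq_abs p, ← sq_abs q]
  rcases le_total |q| |p| with h | h
  · exact (abs_mul_tanh_sub_mul_tanh_le_of_le (abs_nonneg q) h).trans (le_abs_self _)
  · rw [abs_sub_comm, abs_sub_comm (|p| ^ 2)]
    exact (abs_mul_tanh_sub_mul_tanh_le_of_le (abs_nonneg p) h).trans (le_abs_self _)

theorem Real.abs_mul_tanh_mul_sub_mul_tanh_mul_le (x y θ : ℝ) :
    |x * tanh (x * θ) - y * tanh (y * θ)| ≤ |x ^ 2 - y ^ 2| * |θ| := by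
  rcases eq_or_ne θ 0 with rfl | hθ
  · simp
  refine le_of_mul_le_mul_left ?_ (abs_pos.2 hθ)
  calc |θ| * |x * tanh (x * θ) - y * tanh (y * θ)|
      = |(x * θ) * tanh (x * θ) - (y * θ) * tanh (y * θ)| := by rw [← abs_mul]; congr 1; ring
    _ ≤ |(x * θ) ^ 2 - (y * θ) ^ 2| := abs_mul_tanh_sub_mul_tanh_le _ _
    _ = |θ| * (|x ^ 2 - y ^ 2| * |θ|) := by rw [← abs_mul, ← abs_mul]; congr 1; ring

theorem Real.hasDerivAt_mul_tanh_mul (a t : ℝ) :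
    HasDerivAt (fun θ => a * tanh (a * θ)) (a ^ 2 * (1 - tanh (a * t) ^ 2)) t :=
  (((hasDerivAt_tanh (a * t)).comp t ((hasDerivAt_id' t).const_mul a)).const_mul a).congr_deriv
    (by ring)

/-- For all real `x` and `y`, the supremum over `θ ∈ ℝ` of
`|x·tanh(xθ) − y·tanh(yθ)|/|θ|` equals `|x² − y²|`
(the ratio at `θ = 0` being interpreted as its limit `|x² − y²|`). -/
theorem stmt_0 (x y : ℝ) :
    IsLUB {r : ℝ | ∃ θ : ℝ, θ ≠ 0 ∧
        r = |x * Real.tanh (x * θ) - y * Real.tanh (y * θ)| / |θ|}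
      |x ^ 2 - y ^ 2| := by
  let F : ℝ → ℝ := fun θ => x * tanh (x * θ) - y * tanh (y * θ)
  have hF : HasDerivAt F (x ^ 2 - y ^ 2) 0 :=
    ((hasDerivAt_mul_tanh_mul x 0).sub (hasDerivAt_mul_tanh_mul y 0)).congr_deriv (by simp)
  refine isLUB_of_mem_closure ?_ ?_
  · rintro r ⟨θ, hθ, rfl⟩
    exact (div_le_iff₀ (abs_pos.2 hθ)).2 (abs_mul_tanh_mul_sub_mul_tanh_mul_le x y θ)
  · refine mem_closure_of_tendsto (hasDerivAt_iff_tendsto_slope.1 hF).abs ?_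
    filter_upwards [self_mem_nhdsWithin] with θ hθ
    exact ⟨θ, hθ, by simp [F, slope_def_field, abs_div]⟩
end

section
/- For x ≥ 0 and θ ≥ 0, the map θ ↦ (∂/∂x)(x·tanh(xθ)/θ) is nonincreasing; equivalently, (∂/∂θ)(∂/∂x)(x·tanh(xθ)/θ) = (1/(θ²·cosh²(θx)))·(θx − (1/2)·sinh(2θx) − 2(θx)²·tanh(θx)) ≤ 0. -/
/-!
For `θ ≠ 0` the inner derivative is `tanh (x θ) / θ + x / cosh² (x θ)`, whose `θ`-derivative has
the sign of `s - sinh (2 s) / 2 - 2 s² tanh s` with `s = θ x ≥ 0`; this is `≤ 0` because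
`sinh (2 s) ≥ 2 s` and `tanh s ≥ 0`. At `θ = 0` both sides are junk zeros: `u * tanh (u * 0) / 0 = 0`,
so the inner derivative is `0` at `θ = 0` but tends to `2 x` as `θ → 0`; hence the outer function
is either not differentiable at `0` (when `x > 0`) or identically zero (when `x = 0`).
-/

open Real Filter Topology Set

theorem HasDerivAt.tanh {f : ℝ → ℝ} {f' y : ℝ} (hf : HasDerivAt f f' y) :
    HasDerivAt (fun t => Real.tanh (f t)) (f' / Real.cosh (f y) ^ 2) y := by
  have hc := (cosh_pos (f y)).ne'
  simp only [tanh_eq_sinh_div_cosh]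
  refine (hf.sinh.div hf.cosh hc).congr_deriv ?_
  have := cosh_sq_sub_sinh_sq (f y)
  field_simp
  linear_combination f' * this

theorem Real.tanh_nonneg_s1 {y : ℝ} (hy : 0 ≤ y) : 0 ≤ Real.tanh y := by
  rw [tanh_eq_sinh_div_cosh]
  exact div_nonneg (sinh_nonneg_iff.mpr hy) (cosh_pos y).le

theorem hasDerivAt_mul_tanh_mul_div {θ : ℝ} (hθ : θ ≠ 0) (u : ℝ) :
    HasDerivAt (fun u => u * tanh (u * θ) / θ) (tanh (u * θ) / θ + u / cosh (u * θ) ^ 2) u := by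
  have h := ((hasDerivAt_id u).mul (HasDerivAt.tanh (hasDerivAt_mul_const θ))).div_const θ
  simp only [id_eq, one_mul] at h
  refine h.congr_deriv ?_
  field_simp

theorem deriv_mul_tanh_mul_div {t : ℝ} (ht : t ≠ 0) (x : ℝ) :
    deriv (fun u => u * tanh (u * t) / t) x = tanh (x * t) / t + x / cosh (x * t) ^ 2 :=
  (hasDerivAt_mul_tanh_mul_div ht x).deriv

theorem hasDerivAt_tanh_mul_div_add_div_cosh_sq {θ : ℝ} (hθ : θ ≠ 0) (x : ℝ) :
    HasDerivAt (fun t => tanh (x * t) / t + x / cosh (x * t) ^ 2)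
      (1 / (θ ^ 2 * cosh (θ * x) ^ 2) *
        (θ * x - (1 / 2) * sinh (2 * θ * x) - 2 * (θ * x) ^ 2 * tanh (θ * x))) θ := by
  have hmul : HasDerivAt (fun t => x * t) x θ := by simpa using hasDerivAt_const_mul (x := θ) x
  have h := ((HasDerivAt.tanh hmul).div (hasDerivAt_id θ) hθ).add
    ((hasDerivAt_const θ x).div (hmul.cosh.pow 2) (pow_ne_zero 2 (cosh_pos _).ne'))
  refine h.congr_deriv ?_
  have hc := (cosh_pos (x * θ)).ne'
  have := cosh_sq_sub_sinh_sq (x * θ)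
  rw [show 2 * θ * x = 2 * (x * θ) by ring, sinh_two_mul, mul_comm θ x, tanh_eq_sinh_div_cosh]
  simp only [id_eq, Pi.pow_apply]
  field_simp
  ring

theorem tendsto_tanh_mul_div_add_div_cosh_sq (x : ℝ) :
    Tendsto (fun t => tanh (x * t) / t + x / cosh (x * t) ^ 2) (𝓝[≠] 0) (𝓝 (x + x)) := by
  have hslope : Tendsto (fun t => tanh (x * t) / t) (𝓝[≠] 0) (𝓝 x) := by
    have hmul : HasDerivAt (fun t => x * t) x 0 := by
      simpa using hasDerivAt_const_mul (x := (0 : ℝ)) x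
    have h := hasDerivAt_iff_tendsto_slope.mp (HasDerivAt.tanh hmul)
    simp only [mul_zero, cosh_zero, one_pow, div_one] at h
    exact h.congr fun t => by simp [slope_def_field]
  have hcont : Continuous fun t => x / cosh (x * t) ^ 2 :=
    continuous_const.div (by fun_prop) fun t => pow_ne_zero 2 (cosh_pos _).ne'
  have hcosh := (hcont.tendsto 0).mono_left (nhdsWithin_le_nhds (s := {0}ᶜ))
  simp only [mul_zero, cosh_zero, one_pow, div_one] at hcosh
  exact hslope.add hcosh

theorem deriv_deriv_mul_tanh_mul_div_zero (x : ℝ) :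
    deriv (fun t => deriv (fun u => u * tanh (u * t) / t) x) 0 = 0 := by
  set F := fun t => deriv (fun u => u * tanh (u * t) / t) x with hF
  by_cases hdiff : DifferentiableAt ℝ F 0
  swap
  · exact deriv_zero_of_not_differentiableAt hdiff
  have hlim : Tendsto F (𝓝[≠] 0) (𝓝 (x + x)) :=
    (tendsto_tanh_mul_div_add_div_cosh_sq x).congr'
      (eventually_mem_nhdsWithin.mono fun t ht => (deriv_mul_tanh_mul_div ht x).symm)
  have hF0 : F 0 = 0 := by simp [hF]
  have hx : x = 0 := by
    have := tendsto_nhds_unique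
      ((hdiff.continuousAt.tendsto).mono_left nhdsWithin_le_nhds) hlim
    linarith
  have hFzero : F = fun _ => 0 := by
    funext t
    rcases eq_or_ne t 0 with rfl | ht
    · exact hF0
    · simp only [hF, deriv_mul_tanh_mul_div ht, hx]
      simp
  rw [hFzero, deriv_const]

theorem one_div_mul_sub_half_sinh_sub_tanh_nonpos {θ x : ℝ} (h : 0 ≤ θ * x) :
    1 / (θ ^ 2 * cosh (θ * x) ^ 2) *
      (θ * x - (1 / 2) * sinh (2 * θ * x) - 2 * (θ * x) ^ 2 * tanh (θ * x)) ≤ 0 := by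
  have hsinh : 2 * (θ * x) ≤ sinh (2 * θ * x) := by
    rw [mul_assoc]
    exact self_le_sinh_iff.mpr (by linarith)
  have htanh : 0 ≤ 2 * (θ * x) ^ 2 * tanh (θ * x) := by
    have := tanh_nonneg_s1 h
    positivity
  exact mul_nonpos_of_nonneg_of_nonpos (by positivity) (by linarith)

/-- For `x ≥ 0`, the map `θ ↦ (∂/∂x)(x·tanh(xθ)/θ)` is nonincreasing on `θ ≥ 0`;
equivalently, its `θ`-derivative equals
`(1/(θ²·cosh²(θx)))·(θx − (1/2)·sinh(2θx) − 2(θx)²·tanh(θx))`, which is `≤ 0`. -/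
theorem stmt_1 (x : ℝ) (hx : 0 ≤ x) :
    AntitoneOn (fun θ : ℝ => deriv (fun u : ℝ => u * Real.tanh (u * θ) / θ) x)
      (Set.Ioi 0) ∧
    ∀ θ : ℝ, 0 ≤ θ →
      deriv (fun t : ℝ => deriv (fun u : ℝ => u * Real.tanh (u * t) / t) x) θ =
        1 / (θ ^ 2 * Real.cosh (θ * x) ^ 2) *
          (θ * x - (1 / 2) * Real.sinh (2 * θ * x)
            - 2 * (θ * x) ^ 2 * Real.tanh (θ * x)) ∧
      1 / (θ ^ 2 * Real.cosh (θ * x) ^ 2) *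
          (θ * x - (1 / 2) * Real.sinh (2 * θ * x)
            - 2 * (θ * x) ^ 2 * Real.tanh (θ * x)) ≤ 0 := by
  set F := fun t => deriv (fun u => u * tanh (u * t) / t) x
  have hderiv : ∀ θ ≠ 0, HasDerivAt F
      (1 / (θ ^ 2 * cosh (θ * x) ^ 2) *
        (θ * x - (1 / 2) * sinh (2 * θ * x) - 2 * (θ * x) ^ 2 * tanh (θ * x))) θ :=
    fun θ hθ => (hasDerivAt_tanh_mul_div_add_div_cosh_sq hθ x).congr_of_eventuallyEq
      ((eventually_ne_nhds hθ).mono fun t ht => deriv_mul_tanh_mul_div ht x)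
  refine ⟨?_, fun θ hθ => ⟨?_, one_div_mul_sub_half_sinh_sub_tanh_nonpos (mul_nonneg hθ hx)⟩⟩
  · refine antitoneOn_of_hasDerivWithinAt_nonpos (convex_Ioi 0)
      (fun θ hθ => (hderiv θ (ne_of_gt hθ)).continuousAt.continuousWithinAt)
      (fun θ hθ => (hderiv θ (ne_of_gt (interior_subset hθ))).hasDerivWithinAt)
      (fun θ hθ => one_div_mul_sub_half_sinh_sub_tanh_nonpos
        (mul_nonneg (interior_subset hθ).out.le hx))
  · rcases hθ.eq_or_lt with rfl | hθ
    · exact (deriv_deriv_mul_tanh_mul_div_zero x).trans (by simp)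
    · exact (hderiv θ hθ.ne').deriv
end

section
/- For any two real random variables X and Y, sup over θ ∈ ℝ of |E[Y·tanh(θY)] − E[X·tanh(θX)]|/|θ| is at most the 1-Wasserstein distance between the laws of X² and Y². -/
/-!
Since `x ↦ x tanh(θx)` is even, it equals `g(x²)` with `g(t) = √t tanh(θ√t)`, so both
expectations are integrals of `g` against the laws of `X²` and `Y²`. Because `tanh` is monotone and
1-Lipschitz with `tanh 0 = 0`, `g` is `|θ|`-Lipschitz, and integrating the Lipschitz bound along any
coupling of the two laws gives the claim (the easy half of Kantorovich–Rubinstein duality).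
-/

open MeasureTheory

/-- 1-Wasserstein distance: infimum of `E|X − Y|` over couplings. -/
noncomputable def W1 (μ ν : Measure ℝ) : ℝ :=
  sInf {r : ℝ | ∃ π : Measure (ℝ × ℝ),
    π.map Prod.fst = μ ∧ π.map Prod.snd = ν ∧ r = ∫ p, |p.1 - p.2| ∂π}

open scoped NNReal

namespace Real

theorem hasDerivAt_tanh_s2 (x : ℝ) : HasDerivAt tanh (1 / cosh x ^ 2) x := by
  rw [show tanh = sinh / cosh from funext tanh_eq_sinh_div_cosh, ← cosh_sq_sub_sinh_sq x]
  exact ((hasDerivAt_sinh x).div (hasDerivAt_cosh x) (cosh_pos x).ne').congr_deriv (by ring)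

theorem differentiable_tanh : Differentiable ℝ tanh := fun x => (hasDerivAt_tanh_s2 x).differentiableAt

theorem monotone_tanh : Monotone tanh :=
  monotone_of_deriv_nonneg differentiable_tanh fun x => by
    rw [(hasDerivAt_tanh_s2 x).deriv]; positivity

theorem lipschitzWith_one_tanh : LipschitzWith 1 tanh :=
  lipschitzWith_of_nnnorm_deriv_le differentiable_tanh fun x => by
    rw [(hasDerivAt_tanh_s2 x).deriv, ← NNReal.coe_le_coe, coe_nnnorm, norm_eq_abs,
      NNReal.coe_one, abs_of_nonneg (by positivity), div_le_one (by positivity)]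
    nlinarith [one_le_cosh x]

theorem tanh_sub_tanh_le {x y : ℝ} (h : x ≤ y) : tanh y - tanh x ≤ y - x := by
  have := lipschitzWith_one_tanh.dist_le_mul y x
  rw [NNReal.coe_one, one_mul, dist_eq, dist_eq, abs_of_nonneg (sub_nonneg.2 h)] at this
  exact (le_abs_self _).trans this

theorem abs_mul_tanh_sub_mul_tanh_le_s2 (θ : ℝ) {a b : ℝ} (ha : 0 ≤ a) (hb : 0 ≤ b) :
    |a * tanh (θ * a) - b * tanh (θ * b)| ≤ |θ| * |a ^ 2 - b ^ 2| := by
  wlog hθ : 0 ≤ θ generalizing θ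
  · simpa [tanh_neg, neg_add_eq_sub, abs_sub_comm] using this (-θ) (by linarith)
  wlog hba : b ≤ a generalizing a b
  · rw [abs_sub_comm, abs_sub_comm (a ^ 2)]
    exact this hb ha (by linarith)
  have hθb : 0 ≤ θ * b := mul_nonneg hθ hb
  have hθba : θ * b ≤ θ * a := mul_le_mul_of_nonneg_left hba hθ
  -- `a tanh(θa) - b tanh(θb) = a (tanh(θa) - tanh(θb)) + (a - b) tanh(θb)`: bound both terms.
  have h₁ : 0 ≤ tanh (θ * a) - tanh (θ * b) := sub_nonneg.2 (monotone_tanh hθba)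
  have h₂ : tanh (θ * a) - tanh (θ * b) ≤ θ * a - θ * b := tanh_sub_tanh_le hθba
  have h₃ : 0 ≤ tanh (θ * b) := by simpa using monotone_tanh hθb
  have h₄ : tanh (θ * b) ≤ θ * b := by simpa using tanh_sub_tanh_le hθb
  rw [abs_of_nonneg hθ, abs_of_nonneg (sub_nonneg.2 (pow_le_pow_left₀ hb hba 2)), abs_le]
  constructor <;> nlinarith

theorem mul_tanh_mul_eq_sqrt_sq (θ x : ℝ) :
    x * tanh (θ * x) = √(x ^ 2) * tanh (θ * √(x ^ 2)) := by
  rw [sqrt_sq_eq_abs]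
  rcases le_total 0 x with hx | hx
  · rw [abs_of_nonneg hx]
  · rw [abs_of_nonpos hx, mul_neg, tanh_neg, neg_mul_neg]

theorem lipschitzWith_sqrt_mul_tanh (θ : ℝ) :
    LipschitzWith ‖θ‖₊ fun t => √t * tanh (θ * √t) :=
  LipschitzWith.of_dist_le_mul fun s t => by
    rw [dist_eq, dist_eq, coe_nnnorm, norm_eq_abs]
    refine (abs_mul_tanh_sub_mul_tanh_le_s2 θ (sqrt_nonneg s) (sqrt_nonneg t)).trans ?_
    rw [sq_sqrt', sq_sqrt']
    exact mul_le_mul_of_nonneg_left (abs_max_sub_max_le_abs s t 0) (abs_nonneg θ)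

end Real

theorem LipschitzWith.integrable_comp {α E F : Type*} [MeasurableSpace α] {μ : Measure α}
    [IsFiniteMeasure μ] [NormedAddCommGroup E] [NormedAddCommGroup F] {K : ℝ≥0} {f : E → F}
    (hf : LipschitzWith K f) {g : α → E} (hg : Integrable g μ) : Integrable (f ∘ g) μ := by
  refine ((integrable_const ‖f 0‖).add (hg.norm.const_mul K)).mono'
    (hf.continuous.comp_aestronglyMeasurable hg.1) (ae_of_all _ fun x => ?_)
  calc ‖f (g x)‖ ≤ ‖f 0‖ + ‖f (g x) - f 0‖ := norm_le_norm_add_norm_sub' _ _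
    _ ≤ ‖f 0‖ + K * ‖g x‖ := by simpa using hf.norm_sub_le (g x) 0

theorem abs_integral_fst_sub_integral_snd_le {K : ℝ≥0} {f : ℝ → ℝ} (hf : LipschitzWith K f)
    {π : Measure (ℝ × ℝ)} [IsFiniteMeasure π] (h₁ : Integrable Prod.fst π)
    (h₂ : Integrable Prod.snd π) :
    |∫ p, f p.1 ∂π - ∫ p, f p.2 ∂π| ≤ K * ∫ p, |p.1 - p.2| ∂π := by
  have hf₁ : Integrable (fun p => f p.1) π := hf.integrable_comp h₁
  have hf₂ : Integrable (fun p => f p.2) π := hf.integrable_comp h₂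
  rw [← integral_sub hf₁ hf₂, ← integral_const_mul]
  refine abs_integral_le_integral_abs.trans
    (integral_mono (hf₁.sub hf₂).abs ((h₁.sub h₂).abs.const_mul _) fun p => ?_)
  simpa only [Real.dist_eq] using hf.dist_le_mul p.1 p.2

theorem abs_integral_sub_integral_le_mul_W1 {K : ℝ≥0} {f : ℝ → ℝ} (hf : LipschitzWith K f)
    {μ ν : Measure ℝ} [IsProbabilityMeasure μ] [IsProbabilityMeasure ν]
    (hμ : Integrable id μ) (hν : Integrable id ν) :
    |∫ x, f x ∂μ - ∫ x, f x ∂ν| ≤ K * W1 μ ν := by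
  rw [W1, ← smul_eq_mul, ← Real.sInf_smul_of_nonneg K.coe_nonneg]
  refine le_csInf (Set.Nonempty.smul_set ⟨_, μ.prod ν, by simp, by simp, rfl⟩) ?_
  rintro _ ⟨_, ⟨π, hπ₁, hπ₂, rfl⟩, rfl⟩
  have : IsProbabilityMeasure π := by
    rw [← Measure.isProbabilityMeasure_map_iff measurable_fst.aemeasurable, hπ₁]; infer_instance
  rw [← hπ₁, ← hπ₂, integral_map measurable_fst.aemeasurable hf.continuous.aestronglyMeasurable,
    integral_map measurable_snd.aemeasurable hf.continuous.aestronglyMeasurable]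
  exact abs_integral_fst_sub_integral_snd_le hf ((hπ₁ ▸ hμ).comp_measurable measurable_fst)
    ((hπ₂ ▸ hν).comp_measurable measurable_snd)

theorem integral_mul_tanh_mul_eq_integral_map_sq {Ω : Type*} [MeasurableSpace Ω]
    {μ : Measure Ω} (θ : ℝ) {X : Ω → ℝ} (hX : AEMeasurable (fun ω => X ω ^ 2) μ) :
    ∫ ω, X ω * Real.tanh (θ * X ω) ∂μ =
      ∫ t, √t * Real.tanh (θ * √t) ∂(μ.map fun ω => X ω ^ 2) := by
  rw [integral_map hX (Real.lipschitzWith_sqrt_mul_tanh θ).continuous.aestronglyMeasurable]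
  exact integral_congr_ae (ae_of_all _ fun ω => Real.mul_tanh_mul_eq_sqrt_sq θ (X ω))

theorem stmt_2_general {Ω : Type*} [MeasurableSpace Ω] (μ : Measure Ω) [IsProbabilityMeasure μ]
    (X Y : Ω → ℝ)
    (hX2 : Integrable (fun ω => (X ω) ^ 2) μ)
    (hY2 : Integrable (fun ω => (Y ω) ^ 2) μ) :
    ∀ θ : ℝ,
      |(∫ ω, Y ω * Real.tanh (θ * Y ω) ∂μ) - ∫ ω, X ω * Real.tanh (θ * X ω) ∂μ|
        ≤ |θ| * W1 (μ.map (fun ω => (X ω) ^ 2)) (μ.map (fun ω => (Y ω) ^ 2)) := by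
  intro θ
  have := Measure.isProbabilityMeasure_map (μ := μ) hX2.aemeasurable
  have := Measure.isProbabilityMeasure_map (μ := μ) hY2.aemeasurable
  rw [integral_mul_tanh_mul_eq_integral_map_sq θ hX2.aemeasurable,
    integral_mul_tanh_mul_eq_integral_map_sq θ hY2.aemeasurable, abs_sub_comm]
  simpa using abs_integral_sub_integral_le_mul_W1 (Real.lipschitzWith_sqrt_mul_tanh θ)
    ((integrable_map_measure aestronglyMeasurable_id hX2.aemeasurable).2 hX2)
    ((integrable_map_measure aestronglyMeasurable_id hY2.aemeasurable).2 hY2)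

/-- For any two real random variables `X`, `Y` (with integrable squares), the supremum over
`θ` of `|E[Y·tanh(θY)] − E[X·tanh(θX)]|/|θ|` is at most `W₁(law X², law Y²)`. -/
theorem stmt_2 {Ω : Type*} [MeasurableSpace Ω] (μ : Measure Ω) [IsProbabilityMeasure μ]
    (X Y : Ω → ℝ) (hX : Measurable X) (hY : Measurable Y)
    (hX2 : Integrable (fun ω => (X ω) ^ 2) μ)
    (hY2 : Integrable (fun ω => (Y ω) ^ 2) μ) :
    ∀ θ : ℝ,
      |(∫ ω, Y ω * Real.tanh (θ * Y ω) ∂μ) - ∫ ω, X ω * Real.tanh (θ * X ω) ∂μ|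
        ≤ |θ| * W1 (μ.map (fun ω => (X ω) ^ 2)) (μ.map (fun ω => (Y ω) ^ 2)) :=
  stmt_2_general μ X Y hX2 hY2
end

section
/- Let Y have density p_θ*(y) = (1/2)φ(y−θ*) + (1/2)φ(y+θ*) with θ* ≥ 0 and φ the standard normal density. Then f(θ) := E[Y·tanh(θY)] is an increasing, odd, bounded function on ℝ with f(∞) = E|Y| ≤ 1 + θ*. -/
/-!
Since `y * tanh (θ * y) = |y| * tanh (θ * |y|)`, for every `y ≠ 0` the integrand is strictly
increasing and odd in `θ`, bounded by `|y|`, and tends to `|y|` as `θ → ∞`. Integrating against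
any law with a first moment that is not concentrated at `0` (here the mixture has a density) gives
monotonicity, oddness and the bound, and dominated convergence gives the limit. Finally
`E|Y| ≤ √(E Y²)` for each Gaussian component, and `√(1 + s²) ≤ 1 + s`.
-/

open MeasureTheory ProbabilityTheory Filter Real Topology
open scoped ENNReal NNReal

/-- The symmetric two-component Gaussian mixture `(1/2)N(−s,1) + (1/2)N(s,1)`. -/
noncomputable def mixG (s : ℝ) : Measure ℝ :=
  (1 / 2 : ℝ≥0∞) • gaussianReal (-s) 1 + (1 / 2 : ℝ≥0∞) • gaussianReal s 1

/-- The population EM map `f(θ) = E[Y·tanh(θY)]`, `Y ∼ mixG s`. -/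
noncomputable def emMap (s θ : ℝ) : ℝ := ∫ y, y * Real.tanh (θ * y) ∂(mixG s)

namespace Real

theorem tanh_strictMono : StrictMono tanh := fun a b hab => by
  rwa [← artanh_lt_artanh_iff ⟨neg_one_lt_tanh a, tanh_lt_one a⟩
    ⟨neg_one_lt_tanh b, tanh_lt_one b⟩, artanh_tanh, artanh_tanh]

@[fun_prop]
theorem continuous_tanh : Continuous tanh :=
  (continuous_sinh.div continuous_cosh fun x => (cosh_pos x).ne').congr fun x =>
    (tanh_eq_sinh_div_cosh x).symm

theorem tanh_eq_one_sub (x : ℝ) : tanh x = 1 - 2 / (exp (2 * x) + 1) := by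
  have hx : exp (2 * x) = exp x * exp x := by rw [← exp_add]; ring_nf
  rw [tanh_eq, exp_neg, hx]
  field_simp
  ring

theorem tendsto_tanh_atTop : Tendsto tanh atTop (𝓝 1) := by
  have hden : Tendsto (fun x => exp (2 * x) + 1) atTop atTop :=
    tendsto_atTop_add_const_right _ _
      (tendsto_exp_atTop.comp (tendsto_id.const_mul_atTop two_pos))
  have h :=
    tendsto_const_nhds (x := (1 : ℝ)).sub (tendsto_const_nhds (x := (2 : ℝ)).div_atTop hden)
  rw [sub_zero] at h
  exact h.congr fun x => (tanh_eq_one_sub x).symm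

end Real

theorem mul_tanh_mul_eq_abs_mul (θ y : ℝ) : y * tanh (θ * y) = |y| * tanh (θ * |y|) := by
  rcases abs_choice y with h | h <;> rw [h]
  rw [mul_neg, tanh_neg, neg_mul_neg]

theorem abs_mul_tanh_mul_le (θ y : ℝ) : |y * tanh (θ * y)| ≤ |y| := by
  rw [abs_mul]
  exact mul_le_of_le_one_right (abs_nonneg y) (abs_tanh_lt_one _).le

theorem mul_tanh_mul_lt_of_lt {θ₁ θ₂ y : ℝ} (h : θ₁ < θ₂) (hy : y ≠ 0) :
    y * tanh (θ₁ * y) < y * tanh (θ₂ * y) := by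
  rw [mul_tanh_mul_eq_abs_mul, mul_tanh_mul_eq_abs_mul θ₂]
  have hy' := abs_pos.2 hy
  exact mul_lt_mul_of_pos_left (tanh_strictMono (mul_lt_mul_of_pos_right h hy')) hy'

theorem tendsto_mul_tanh_mul_atTop (y : ℝ) :
    Tendsto (fun θ => y * tanh (θ * y)) atTop (𝓝 |y|) := by
  simp_rw [mul_tanh_mul_eq_abs_mul _ y]
  rcases eq_or_ne y 0 with rfl | hy
  · simp
  · simpa using (tendsto_tanh_atTop.comp
      (tendsto_id.atTop_mul_const (abs_pos.2 hy))).const_mul |y|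

section IntegralMulTanh

variable {μ : Measure ℝ}

theorem integrable_mul_tanh_mul (hμ : Integrable (fun y => y) μ) (θ : ℝ) :
    Integrable (fun y => y * tanh (θ * y)) μ :=
  hμ.abs.mono (by fun_prop) (ae_of_all _ fun y => by simpa using abs_mul_tanh_mul_le θ y)

theorem strictMono_integral_mul_tanh_mul (hμ : Integrable (fun y => y) μ) (h0 : μ {0}ᶜ ≠ 0) :
    StrictMono fun θ => ∫ y, y * tanh (θ * y) ∂μ := by
  intro θ₁ θ₂ h
  have hlt (y : ℝ) (hy : y ≠ 0) := sub_pos.2 (mul_tanh_mul_lt_of_lt h hy)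
  have hle (y : ℝ) : 0 ≤ y * tanh (θ₂ * y) - y * tanh (θ₁ * y) := by
    rcases eq_or_ne y 0 with rfl | hy
    · simp
    · exact (hlt y hy).le
  rw [← sub_pos, ← integral_sub (integrable_mul_tanh_mul hμ θ₂) (integrable_mul_tanh_mul hμ θ₁),
    integral_pos_iff_support_of_nonneg hle
      ((integrable_mul_tanh_mul hμ θ₂).sub (integrable_mul_tanh_mul hμ θ₁))]
  exact h0.bot_lt.trans_le (measure_mono fun y hy => (hlt y hy).ne')

theorem integral_mul_tanh_neg_mul (θ : ℝ) :
    ∫ y, y * tanh (-θ * y) ∂μ = -∫ y, y * tanh (θ * y) ∂μ := by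
  simp only [neg_mul, tanh_neg, mul_neg, integral_neg]

theorem abs_integral_mul_tanh_mul_le (hμ : Integrable (fun y => y) μ) (θ : ℝ) :
    |∫ y, y * tanh (θ * y) ∂μ| ≤ ∫ y, |y| ∂μ :=
  norm_integral_le_of_norm_le (f := fun y => y * tanh (θ * y)) hμ.abs
    (ae_of_all _ (abs_mul_tanh_mul_le θ))

theorem tendsto_integral_mul_tanh_mul_atTop (hμ : Integrable (fun y => y) μ) :
    Tendsto (fun θ => ∫ y, y * tanh (θ * y) ∂μ) atTop (𝓝 (∫ y, |y| ∂μ)) :=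
  tendsto_integral_filter_of_dominated_convergence _
    (Eventually.of_forall fun θ => (integrable_mul_tanh_mul hμ θ).aestronglyMeasurable)
    (Eventually.of_forall fun θ => ae_of_all _ (abs_mul_tanh_mul_le θ)) hμ.abs
    (ae_of_all _ tendsto_mul_tanh_mul_atTop)

end IntegralMulTanh

theorem integral_abs_le_sqrt_integral_sq {Ω : Type*} [MeasurableSpace Ω] {μ : Measure Ω}
    [IsProbabilityMeasure μ] {X : Ω → ℝ} (hX : MemLp X 2 μ) :
    ∫ ω, |X ω| ∂μ ≤ √(∫ ω, X ω ^ 2 ∂μ) := by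
  have h := variance_nonneg (fun ω => ‖X ω‖) μ
  rw [variance_eq_sub hX.norm] at h
  simp only [Pi.pow_apply, norm_eq_abs, sq_abs, sub_nonneg] at h
  exact (le_abs_self _).trans (abs_le_sqrt h)

theorem integral_sq_gaussianReal (m : ℝ) (v : ℝ≥0) :
    ∫ x, x ^ 2 ∂gaussianReal m v = v + m ^ 2 := by
  have h := variance_eq_sub (memLp_id_gaussianReal (μ := m) (v := v) 2)
  rw [variance_id_gaussianReal] at h
  simp only [Pi.pow_apply, id_eq, integral_id_gaussianReal] at h
  linarith

theorem integral_abs_gaussianReal_le (m : ℝ) (v : ℝ≥0) :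
    ∫ x, |x| ∂gaussianReal m v ≤ √v + |m| := by
  refine (integral_abs_le_sqrt_integral_sq (X := fun x => x) (memLp_id_gaussianReal 2)).trans ?_
  rw [integral_sq_gaussianReal, sqrt_le_left (by positivity)]
  nlinarith [sq_sqrt v.coe_nonneg, sq_abs m, mul_nonneg (sqrt_nonneg v) (abs_nonneg m)]

theorem integrable_fun_id_gaussianReal (m : ℝ) (v : ℝ≥0) :
    Integrable (fun x => x) (gaussianReal m v) :=
  (memLp_id_gaussianReal 1).integrable le_rfl

instance (s : ℝ) : IsProbabilityMeasure (mixG s) where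
  measure_univ := by simp [mixG, ENNReal.inv_two_add_inv_two]

theorem mixG_absolutelyContinuous (s : ℝ) : mixG s ≪ volume :=
  ((gaussianReal_absolutelyContinuous _ one_ne_zero).smul_left _).add_left
    ((gaussianReal_absolutelyContinuous _ one_ne_zero).smul_left _)

theorem integrable_mixG {s : ℝ} {f : ℝ → ℝ} (h₁ : Integrable f (gaussianReal (-s) 1))
    (h₂ : Integrable f (gaussianReal s 1)) : Integrable f (mixG s) :=
  (h₁.smul_measure (by simp)).add_measure (h₂.smul_measure (by simp))

theorem integral_mixG {s : ℝ} {f : ℝ → ℝ} (h₁ : Integrable f (gaussianReal (-s) 1))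
    (h₂ : Integrable f (gaussianReal s 1)) :
    ∫ y, f y ∂mixG s = (∫ y, f y ∂gaussianReal (-s) 1 + ∫ y, f y ∂gaussianReal s 1) / 2 := by
  rw [mixG, integral_add_measure (h₁.smul_measure (by simp)) (h₂.smul_measure (by simp)),
    integral_smul_measure, integral_smul_measure]
  norm_num
  ring

theorem integral_abs_mixG_le {s : ℝ} (hs : 0 ≤ s) : ∫ y, |y| ∂mixG s ≤ 1 + s := by
  rw [integral_mixG (integrable_fun_id_gaussianReal _ _).abs
    (integrable_fun_id_gaussianReal _ _).abs]
  have h₁ := integral_abs_gaussianReal_le (-s) 1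
  have h₂ := integral_abs_gaussianReal_le s 1
  rw [abs_neg] at h₁
  simp only [abs_of_nonneg hs, NNReal.coe_one, sqrt_one] at h₁ h₂
  linarith

/-- `f(θ) = E[Y·tanh(θY)]` is increasing, odd and bounded, with
`f(∞) = E|Y| ≤ 1 + θ*`. -/
theorem stmt_3 (s : ℝ) (hs : 0 ≤ s) :
    StrictMono (emMap s) ∧
    (∀ θ : ℝ, emMap s (-θ) = -(emMap s θ)) ∧
    (∀ θ : ℝ, |emMap s θ| ≤ ∫ y, |y| ∂(mixG s)) ∧
    Filter.Tendsto (emMap s) Filter.atTop (nhds (∫ y, |y| ∂(mixG s))) ∧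
    (∫ y, |y| ∂(mixG s)) ≤ 1 + s := by
  have hY : Integrable (fun y => y) (mixG s) :=
    integrable_mixG (integrable_fun_id_gaussianReal _ _) (integrable_fun_id_gaussianReal _ _)
  have hY₀ : mixG s {0}ᶜ ≠ 0 := by
    rw [prob_compl_eq_one_sub (measurableSet_singleton 0),
      mixG_absolutelyContinuous s volume_singleton]
    simp
  exact ⟨strictMono_integral_mul_tanh_mul hY hY₀, integral_mul_tanh_neg_mul,
    abs_integral_mul_tanh_mul_le hY, tendsto_integral_mul_tanh_mul_atTop hY,
    integral_abs_mixG_le hs⟩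
end

section
/- For any σ ≥ 0 and Z ∼ N(0,1), E[1/cosh²(σZ)] ≤ 1 − σ²/(2(1 + 2σ²)). -/
/-!
Since `cosh² x = 1 + sinh² x ≥ 1 + x²` and `(1 + t)⁻¹ ≤ (1 + e^{-t}) / 2` for `t ≥ 0`, we get
`sech² x ≤ (1 + e^{-x²}) / 2`. The Gaussian integral `E[e^{-σ²Z²}] = (1 + 2σ²)^{-1/2}` then gives
`E[sech²(σZ)] ≤ (1 + (1 + 2σ²)^{-1/2}) / 2`, which is at most the claimed bound.
-/

open MeasureTheory ProbabilityTheory Real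
open scoped NNReal

theorem one_add_sq_le_cosh_sq (x : ℝ) : 1 + x ^ 2 ≤ cosh x ^ 2 := by
  have h : |x| ≤ |sinh x| := by
    rw [abs_sinh]
    exact self_le_sinh_iff.mpr (abs_nonneg x)
  rw [cosh_sq']
  exact (add_le_add_iff_left 1).mpr (sq_le_sq.mpr h)

theorem inv_one_add_le_one_add_exp_neg_div_two {t : ℝ} (ht : 0 ≤ t) :
    (1 + t)⁻¹ ≤ (1 + exp (-t)) / 2 := by
  rw [inv_le_iff_one_le_mul₀' (by positivity)]
  have hexp : 1 - t ≤ exp (-t) := by linarith [add_one_le_exp (-t)]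
  rcases le_total t 1 with h | h
  · nlinarith
  · nlinarith [exp_pos (-t)]

theorem one_div_cosh_sq_le (x : ℝ) : 1 / cosh x ^ 2 ≤ (1 + exp (-x ^ 2)) / 2 :=
  calc 1 / cosh x ^ 2 ≤ (1 + x ^ 2)⁻¹ := by
        rw [one_div]
        exact inv_anti₀ (by positivity) (one_add_sq_le_cosh_sq x)
    _ ≤ (1 + exp (-x ^ 2)) / 2 := inv_one_add_le_one_add_exp_neg_div_two (sq_nonneg x)

theorem integral_exp_neg_mul_sq_gaussianReal (v : ℝ≥0) {b : ℝ} (hb : 0 < 1 + 2 * b * v) :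
    ∫ x, exp (-b * x ^ 2) ∂gaussianReal 0 v = (√(1 + 2 * b * v))⁻¹ := by
  rcases eq_or_ne v 0 with rfl | hv
  · simp [gaussianReal_zero_var]
  have hv' : (0 : ℝ) < v := by positivity
  have hc : b + (2 * (v : ℝ))⁻¹ = (1 + 2 * b * v) / (2 * v) := by field_simp; ring
  calc ∫ x, exp (-b * x ^ 2) ∂gaussianReal 0 v
      = ∫ x, (√(2 * π * v))⁻¹ * exp (-(b + (2 * (v : ℝ))⁻¹) * x ^ 2) := by
        rw [integral_gaussianReal_eq_integral_smul hv]
        congr 1 with x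
        rw [gaussianPDFReal, smul_eq_mul, mul_assoc, ← exp_add]
        congr 2
        field_simp
        ring
    _ = (√(1 + 2 * b * v))⁻¹ := by
        rw [integral_const_mul, integral_gaussian, hc, ← Real.sqrt_inv,
          ← sqrt_mul (by positivity), ← Real.sqrt_inv]
        congr 1
        field_simp

theorem one_add_inv_sqrt_div_two_le {u : ℝ} (hu : 0 ≤ u) :
    (1 + (√(1 + 2 * u))⁻¹) / 2 ≤ 1 - u / (2 * (1 + 2 * u)) := by
  set s := √(1 + 2 * u)
  have hs : s ^ 2 = 1 + 2 * u := sq_sqrt (by positivity)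
  have hs1 : 1 ≤ s := one_le_sqrt.mpr (by linarith)
  have hgap : 1 - u / (2 * (1 + 2 * u)) - (1 + s⁻¹) / 2 = (s - 1) ^ 2 / (4 * s ^ 2) := by
    rw [← hs]
    field_simp
    linear_combination 2 * hs
  have : 0 ≤ (s - 1) ^ 2 / (4 * s ^ 2) := by positivity
  linarith

theorem stmt_12_general (σ : ℝ) :
    (∫ z, 1 / Real.cosh (σ * z) ^ 2 ∂(gaussianReal 0 1))
      ≤ 1 - σ ^ 2 / (2 * (1 + 2 * σ ^ 2)) := by
  have hexp : (fun z => exp (-(σ * z) ^ 2)) = fun z => exp (-σ ^ 2 * z ^ 2) := by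
    simp only [mul_pow, neg_mul]
  have hint : Integrable (fun z => exp (-(σ * z) ^ 2)) (gaussianReal 0 1) :=
    Integrable.of_bound (by fun_prop) 1 (ae_of_all _ fun z => by
      rw [norm_of_nonneg (exp_nonneg _), exp_le_one_iff, neg_nonpos]
      positivity)
  calc ∫ z, 1 / cosh (σ * z) ^ 2 ∂gaussianReal 0 1
      ≤ ∫ z, (1 + exp (-(σ * z) ^ 2)) / 2 ∂gaussianReal 0 1 :=
        integral_mono_of_nonneg (ae_of_all _ fun z => by positivity)
          (((integrable_const 1).add hint).div_const 2) (ae_of_all _ fun z => one_div_cosh_sq_le _)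
    _ = (1 + (√(1 + 2 * σ ^ 2))⁻¹) / 2 := by
        rw [integral_div, integral_add (integrable_const 1) hint, integral_const, probReal_univ,
          one_smul, hexp, integral_exp_neg_mul_sq_gaussianReal 1 (by positivity),
          NNReal.coe_one, mul_one]
    _ ≤ 1 - σ ^ 2 / (2 * (1 + 2 * σ ^ 2)) := one_add_inv_sqrt_div_two_le (sq_nonneg σ)

/-- For `σ ≥ 0` and `Z ∼ N(0,1)`, `E[1/cosh²(σZ)] ≤ 1 − σ²/(2(1 + 2σ²))`. -/
theorem stmt_12 (σ : ℝ) (hσ : 0 ≤ σ) :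
    (∫ z, 1 / Real.cosh (σ * z) ^ 2 ∂(gaussianReal 0 1))
      ≤ 1 - σ ^ 2 / (2 * (1 + 2 * σ ^ 2)) :=
  stmt_12_general σ
end

section
/- Let h: ℝ₊ → ℝ₊ be continuous, increasing, h(0) = 0, and h(x) < x for all x ∈ (0, x₀). Suppose x_{t+1} ≤ x_t − h(x_t) with 0 < x₀. Then {x_t} is a nonincreasing sequence of nonnegative reals converging to 0, and x_t ≤ G⁻¹(t) for t ≥ 1, where G(x) = ∫_x^{x₀} dτ/h(τ). -/
/-!
Since `h ≥ 0`, the sequence decreases; its limit `L ≥ 0` satisfies `L ≤ L - h L` by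
continuity, so `h L ≤ 0` and strict monotonicity forces `L = 0`. For the rate, `1 / h` is
decreasing, so on `[x_{t+1}, x_t]` it is at least `1 / h(x_t)`, and the interval has length
at least `h(x_t)`: each step adds at least `1` to `G(x_t) = ∫_{x_t}^{x₀} 1/h`.
-/

open Set Filter Topology intervalIntegral

section

variable {h : ℝ → ℝ} {x : ℕ → ℝ}

lemma pos_of_strictMonoOn_Ici (hmono : StrictMonoOn h (Ici 0)) (h0 : h 0 = 0) {z : ℝ}
    (hz : 0 < z) : 0 < h z :=
  h0 ▸ hmono self_mem_Ici hz.le hz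

lemma antitone_of_le_sub (hpos : ∀ z, 0 < z → 0 < h z) (h0 : h 0 = 0) (hxnn : ∀ t, 0 ≤ x t)
    (hrec : ∀ t, x (t + 1) ≤ x t - h (x t)) : Antitone x := by
  refine antitone_nat_of_succ_le fun t => ?_
  have hh : 0 ≤ h (x t) := by
    rcases (hxnn t).eq_or_lt with hx | hx
    · rw [← hx, h0]
    · exact (hpos _ hx).le
  linarith [hrec t]

lemma tendsto_zero_of_le_sub (hcont : ContinuousOn h (Ici 0)) (hpos : ∀ z, 0 < z → 0 < h z)
    (hanti : Antitone x) (hxnn : ∀ t, 0 ≤ x t) (hrec : ∀ t, x (t + 1) ≤ x t - h (x t)) :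
    Tendsto x atTop (𝓝 0) := by
  have hbdd : BddBelow (range x) := ⟨0, by rintro _ ⟨t, rfl⟩; exact hxnn t⟩
  set L := ⨅ t, x t
  have hL : Tendsto x atTop (𝓝 L) := tendsto_atTop_ciInf hanti hbdd
  have hL0 : 0 ≤ L := le_ciInf hxnn
  have hhx : Tendsto (fun t => h (x t)) atTop (𝓝 (h L)) :=
    (hcont L hL0).tendsto.comp (tendsto_nhdsWithin_iff.mpr ⟨hL, .of_forall hxnn⟩)
  have hfix : L ≤ L - h L :=
    le_of_tendsto_of_tendsto' (hL.comp (tendsto_add_atTop_nat 1)) (hL.sub hhx) hrec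
  have hL_eq : L = 0 := by
    by_contra hne
    linarith [hpos L (lt_of_le_of_ne hL0 (Ne.symm hne))]
  rwa [hL_eq] at hL

lemma intervalIntegrable_one_div (hcont : ContinuousOn h (Ioi 0)) (hpos : ∀ z, 0 < z → 0 < h z)
    {a b : ℝ} (ha : 0 < a) (hb : 0 < b) :
    IntervalIntegrable (fun τ => 1 / h τ) MeasureTheory.volume a b := by
  have hsub : uIcc a b ⊆ Ioi 0 := fun z hz => lt_of_lt_of_le (lt_min ha hb) hz.1
  exact (continuousOn_const.div (hcont.mono hsub) fun z hz =>
    (hpos z (hsub hz)).ne').intervalIntegrable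

lemma one_le_integral_one_div_of_le_sub (hcont : ContinuousOn h (Ioi 0))
    (hmono : MonotoneOn h (Ioi 0)) (hpos : ∀ z, 0 < z → 0 < h z) {a b : ℝ} (ha : 0 < a)
    (hb : 0 < b) (hab : a ≤ b - h b) : 1 ≤ ∫ τ in a..b, 1 / h τ := by
  have hhb := hpos b hb
  have hab' : a ≤ b := by linarith
  have hle : ∀ τ ∈ Icc a b, 1 / h b ≤ 1 / h τ := fun τ hτ =>
    one_div_le_one_div_of_le (hpos τ (ha.trans_le hτ.1))
      (hmono (mem_Ioi.2 (ha.trans_le hτ.1)) hb hτ.2)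
  calc (1 : ℝ) ≤ (b - a) / h b := by rw [le_div_iff₀ hhb]; linarith
    _ = ∫ _ in a..b, 1 / h b := by rw [integral_const, smul_eq_mul]; ring
    _ ≤ ∫ τ in a..b, 1 / h τ :=
      integral_mono_on hab' intervalIntegrable_const
        (intervalIntegrable_one_div hcont hpos ha hb) hle

lemma natCast_le_integral_one_div (hcont : ContinuousOn h (Ioi 0))
    (hmono : MonotoneOn h (Ioi 0)) (hpos : ∀ z, 0 < z → 0 < h z) (hanti : Antitone x)
    (hrec : ∀ t, x (t + 1) ≤ x t - h (x t)) :
    ∀ t, 0 < x t → (t : ℝ) ≤ ∫ τ in x t..x 0, 1 / h τ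
  | 0, _ => by simp
  | n + 1, hxn1 => by
    have hxn : 0 < x n := hxn1.trans_le (hanti n.le_succ)
    have hx0 : 0 < x 0 := hxn.trans_le (hanti n.zero_le)
    have hstep := one_le_integral_one_div_of_le_sub hcont hmono hpos hxn1 hxn (hrec n)
    rw [← integral_add_adjacent_intervals (intervalIntegrable_one_div hcont hpos hxn1 hxn)
      (intervalIntegrable_one_div hcont hpos hxn hx0)]
    push_cast
    linarith [natCast_le_integral_one_div hcont hmono hpos hanti hrec n hxn]

end

theorem stmt_19_general (x₀ : ℝ) (h : ℝ → ℝ)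
    (hcont : ContinuousOn h (Set.Ici 0))
    (hmono : StrictMonoOn h (Set.Ici 0))
    (h0 : h 0 = 0)
    (x : ℕ → ℝ) (hxnn : ∀ t, 0 ≤ x t) (hx0 : x 0 = x₀)
    (hrec : ∀ t, x (t + 1) ≤ x t - h (x t)) :
    Antitone x ∧ Filter.Tendsto x Filter.atTop (nhds 0) ∧
    ∀ t : ℕ, 1 ≤ t → x t = 0 ∨ (t : ℝ) ≤ ∫ τ in (x t)..x₀, 1 / h τ := by
  have hpos : ∀ z, 0 < z → 0 < h z := fun _ => pos_of_strictMonoOn_Ici hmono h0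
  have hanti : Antitone x := antitone_of_le_sub hpos h0 hxnn hrec
  refine ⟨hanti, tendsto_zero_of_le_sub hcont hpos hanti hxnn hrec, fun t _ => ?_⟩
  rcases (hxnn t).eq_or_lt with hxt | hxt
  · exact .inl hxt.symm
  · exact .inr (hx0 ▸ natCast_le_integral_one_div (hcont.mono Ioi_subset_Ici_self)
      (hmono.monotoneOn.mono Ioi_subset_Ici_self) hpos hanti hrec t hxt)

/-- Convergence-rate lemma: if `h : ℝ₊ → ℝ₊` is continuous, increasing, `h(0) = 0`,
`h(x) < x` on `(0, x₀)`, and `x_{t+1} ≤ x_t − h(x_t)` with `x_0 = x₀ > 0`, then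
`{x_t}` is a nonincreasing sequence of nonnegative reals converging to `0`, and
`x_t ≤ G⁻¹(t)` for `t ≥ 1` (i.e. `x_t = 0` or `G(x_t) ≥ t`), where
`G(x) = ∫_x^{x₀} dτ/h(τ)`. -/
theorem stmt_19 (x₀ : ℝ) (hx₀ : 0 < x₀) (h : ℝ → ℝ)
    (hcont : ContinuousOn h (Set.Ici 0))
    (hmono : StrictMonoOn h (Set.Ici 0))
    (h0 : h 0 = 0)
    (hlt : ∀ z ∈ Set.Ioo (0 : ℝ) x₀, h z < z)
    (x : ℕ → ℝ) (hxnn : ∀ t, 0 ≤ x t) (hx0 : x 0 = x₀)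
    (hrec : ∀ t, x (t + 1) ≤ x t - h (x t)) :
    Antitone x ∧ Filter.Tendsto x Filter.atTop (nhds 0) ∧
    ∀ t : ℕ, 1 ≤ t → x t = 0 ∨ (t : ℝ) ≤ ∫ τ in (x t)..x₀, 1 / h τ :=
  stmt_19_general x₀ h hcont hmono h0 x hxnn hx0 hrec
end
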